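/- Let F be the free group on x_1, …, x_{2g}, m and suppose given u_i^♯, u_i^♭ ∈ ⟨x_1,…,x_{2g}⟩ (1 ≤ i ≤ 2g) with [u_1^♭,u_2^♭]⋯[u_{2g−1}^♭,u_{2g}^♭] = [u_1^♯,u_2^♯]⋯[u_{2g−1}^♯,u_{2g}^♯]. Set r_i = m u_i^♯ m⁻¹ (u_i^♭)⁻¹, w_i = Π_{j=1}^i [u_{2j−1}^♭, u_{2j}^♭], and W_i = w_{i−1} r_{2i−1} w_{i−1}⁻¹ · (w_{i−1} u_{2i−1}^♭) r_{2i} (w_{i−1} u_{2i−1}^♭)⁻¹ · (w_i u_{2i}^♭) r_{2i−1}⁻¹ (w_i u_{2i}^♭)⁻¹ · w_i r_{2i}⁻¹ w_i⁻¹. Then Π_{i=1}^g W_i = m·([u_1^♯,u_2^♯]⋯[u_{2g−1}^♯,u_{2g}^♯])·m⁻¹·w_g⁻¹ in F. -/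

import Mathlib

/-!
Each `W_i` collapses, by a free computation in the group, to `w_{i-1} · m [u_{2i-1}^♯, u_{2i}^♯] m⁻¹ · w_i⁻¹`:
the `u^♭`-factors of the four relators cancel against the conjugating words, leaving the commutator
of the `u^♯` conjugated by `m`. The product over `i` then telescopes, since `w_0 = 1`.
-/

open scoped commutatorElement

section Group

variable {G : Type*} [Group G]

theorem conj_relator_block (a b c S T m : G) :
    a * (m * S * m⁻¹ * b⁻¹) * a⁻¹
      * ((a * b) * (m * T * m⁻¹ * c⁻¹) * (a * b)⁻¹)
      * ((a * ⁅b, c⁆ * c) * (m * S * m⁻¹ * b⁻¹)⁻¹ * (a * ⁅b, c⁆ * c)⁻¹)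
      * (a * ⁅b, c⁆ * (m * T * m⁻¹ * c⁻¹)⁻¹ * (a * ⁅b, c⁆)⁻¹)
    = a * (m * ⁅S, T⁆ * m⁻¹) * (a * ⁅b, c⁆)⁻¹ := by
  simp only [commutatorElement_def]
  group

theorem List.prod_range_mul_mul_inv (p z : ℕ → G) (n : ℕ) :
    ((List.range n).map fun k => p k * z k * (p (k + 1))⁻¹).prod
      = p 0 * ((List.range n).map z).prod * (p n)⁻¹ := by
  induction n with
  | zero => simp
  | succ n ih => simp only [List.prod_range_succ, ih]; group

theorem List.prod_map_conj {ι : Type*} (m : G) (f : ι → G) (l : List ι) :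
    (l.map fun i => m * f i * m⁻¹).prod = m * (l.map f).prod * m⁻¹ := by
  rw [← MulAut.conj_apply, map_list_prod, List.map_map]
  rfl

end Group

theorem surgery_identity_key_general (g : ℕ)
    (m : FreeGroup (Fin (2*g) ⊕ Unit))
    (us ub : ℕ → FreeGroup (Fin (2*g) ⊕ Unit))
    (r : ℕ → FreeGroup (Fin (2*g) ⊕ Unit))
    (hr : ∀ i, r i = m * us i * m⁻¹ * (ub i)⁻¹)
    (w : ℕ → FreeGroup (Fin (2*g) ⊕ Unit))
    (hw : ∀ i, w i = ((List.range i).map fun j => ⁅ub (2*j), ub (2*j+1)⁆).prod)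
    (W : ℕ → FreeGroup (Fin (2*g) ⊕ Unit))
    (hW : ∀ i, W i =
      w (i-1) * r (2*(i-1)) * (w (i-1))⁻¹
      * ((w (i-1) * ub (2*(i-1))) * r (2*(i-1)+1) * (w (i-1) * ub (2*(i-1)))⁻¹)
      * ((w i * ub (2*(i-1)+1)) * (r (2*(i-1)))⁻¹ * (w i * ub (2*(i-1)+1))⁻¹)
      * (w i * (r (2*(i-1)+1))⁻¹ * (w i)⁻¹)) :
    ((List.range g).map fun i => W (i+1)).prod
      = m * (((List.range g).map fun j => ⁅us (2*j), us (2*j+1)⁆).prod) * m⁻¹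
        * (w g)⁻¹ := by
  have hw_zero : w 0 = 1 := by simp [hw]
  have hw_succ (k : ℕ) : w (k + 1) = w k * ⁅ub (2*k), ub (2*k+1)⁆ := by
    simp only [hw, List.prod_range_succ]
  have hW_succ (k : ℕ) :
      W (k + 1) = w k * (m * ⁅us (2*k), us (2*k+1)⁆ * m⁻¹) * (w (k + 1))⁻¹ := by
    rw [hW, Nat.add_sub_cancel, hr, hr, hw_succ]
    exact conj_relator_block _ _ _ _ _ _
  simp only [hW_succ, List.prod_range_mul_mul_inv w, hw_zero, one_mul, List.prod_map_conj]

/-- The key computation for the identities associated to Dehn surgeries and spliced sums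
(proof of Theorem 3.4): in the free group `F` on `x_1, …, x_{2g}, m`, given
`u_i^♯, u_i^♭ ∈ ⟨x_1,…,x_{2g}⟩` with
`[u_1^♭,u_2^♭]⋯[u_{2g−1}^♭,u_{2g}^♭] = [u_1^♯,u_2^♯]⋯[u_{2g−1}^♯,u_{2g}^♯]`, and
`r_i = m u_i^♯ m⁻¹ (u_i^♭)⁻¹`, `w_i = Π_{j=1}^i [u_{2j−1}^♭, u_{2j}^♭]`, one has
`Π_{i=1}^g W_i = m·([u_1^♯,u_2^♯]⋯[u_{2g−1}^♯,u_{2g}^♯])·m⁻¹·w_g⁻¹`.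
(The `u`-index is 0-based: `u_{2i−1}` is `us (2*(i-1))`.) -/
theorem surgery_identity_key (g : ℕ)
    (m : FreeGroup (Fin (2*g) ⊕ Unit)) (hm : m = FreeGroup.of (Sum.inr ()))
    (us ub : ℕ → FreeGroup (Fin (2*g) ⊕ Unit))
    (hus : ∀ i, i < 2*g →
      us i ∈ Subgroup.closure (Set.range fun j : Fin (2*g) => FreeGroup.of (Sum.inl j)))
    (hub : ∀ i, i < 2*g →
      ub i ∈ Subgroup.closure (Set.range fun j : Fin (2*g) => FreeGroup.of (Sum.inl j)))
    (hcomm : ((List.range g).map fun j => ⁅ub (2*j), ub (2*j+1)⁆).prod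
      = ((List.range g).map fun j => ⁅us (2*j), us (2*j+1)⁆).prod)
    (r : ℕ → FreeGroup (Fin (2*g) ⊕ Unit))
    (hr : ∀ i, r i = m * us i * m⁻¹ * (ub i)⁻¹)
    (w : ℕ → FreeGroup (Fin (2*g) ⊕ Unit))
    (hw : ∀ i, w i = ((List.range i).map fun j => ⁅ub (2*j), ub (2*j+1)⁆).prod)
    (W : ℕ → FreeGroup (Fin (2*g) ⊕ Unit))
    (hW : ∀ i, W i =
      w (i-1) * r (2*(i-1)) * (w (i-1))⁻¹
      * ((w (i-1) * ub (2*(i-1))) * r (2*(i-1)+1) * (w (i-1) * ub (2*(i-1)))⁻¹)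
      * ((w i * ub (2*(i-1)+1)) * (r (2*(i-1)))⁻¹ * (w i * ub (2*(i-1)+1))⁻¹)
      * (w i * (r (2*(i-1)+1))⁻¹ * (w i)⁻¹)) :
    ((List.range g).map fun i => W (i+1)).prod
      = m * (((List.range g).map fun j => ⁅us (2*j), us (2*j+1)⁆).prod) * m⁻¹
        * (w g)⁻¹ :=
  surgery_identity_key_general g m us ub r hr w hw W hW
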